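/- For every u ∈ R and L = h²∂² + 2u ∈ Ψ(R) there exists a unique pseudo-differential operator M ∈ Ψ(R) such that M − h∂ has order ≤ 0 (i.e. contains only powers ∂ⁿ with n ≤ 0) and M² = L. Moreover the coefficient of ∂⁰ in M is 0, the coefficient of ∂⁻¹ is u/h, and the coefficient of ∂⁻² is −(∂u)/(2h). -/

import Mathlib

open scoped BigOperators

/-- Generalized binomial coefficient `C(k,l) = k(k-1)⋯(k-l+1)/l!` for `k : ℤ`. -/
def gbinom (k : ℤ) (l : ℕ) : ℚ :=
  (∏ i ∈ Finset.range l, ((k : ℚ) - i)) / (Nat.factorial l)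

/-- Pseudo-differential operators (and symbols): coefficient functions `ℤ → R`
with support bounded above.  The parameter `d` (the derivation) determines the product. -/
structure PDO (R : Type) [CommRing R] [Algebra ℚ R] (d : R →+ R) where
  coeff : ℤ → R
  bdd : ∃ N : ℤ, ∀ n : ℤ, N < n → coeff n = 0

namespace PDO

variable {R : Type} [CommRing R] [Algebra ℚ R] {d : R →+ R}

theorem ext' {A B : PDO R d} (h : A.coeff = B.coeff) : A = B := by
  cases A; cases B; cases h; rfl

set_option linter.unusedSectionVars false in
theorem iterD_zero (d : R →+ R) (j : ℕ) : d^[j] (0 : R) = 0 := by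
  induction j with
  | zero => rfl
  | succ j ih => rw [Function.iterate_succ_apply', ih, map_zero]

instance : Zero (PDO R d) := ⟨⟨fun _ => 0, ⟨0, fun _ _ => rfl⟩⟩⟩

instance : One (PDO R d) :=
  ⟨⟨fun n => if n = 0 then 1 else 0, ⟨0, fun n hn => if_neg (by omega)⟩⟩⟩

instance : Add (PDO R d) :=
  ⟨fun A B => ⟨fun n => A.coeff n + B.coeff n, by
    obtain ⟨N, hN⟩ := A.bdd
    obtain ⟨M, hM⟩ := B.bdd
    exact ⟨max N M, fun n hn => by
      show A.coeff n + B.coeff n = 0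
      rw [hN n (lt_of_le_of_lt (le_max_left N M) hn),
        hM n (lt_of_le_of_lt (le_max_right N M) hn), add_zero]⟩⟩⟩

instance : Neg (PDO R d) :=
  ⟨fun A => ⟨fun n => -A.coeff n, by
    obtain ⟨N, hN⟩ := A.bdd
    exact ⟨N, fun n hn => by show -A.coeff n = 0; rw [hN n hn, neg_zero]⟩⟩⟩

instance : SMul ℚ (PDO R d) :=
  ⟨fun c A => ⟨fun n => c • A.coeff n, by
    obtain ⟨N, hN⟩ := A.bdd
    exact ⟨N, fun n hn => by show c • A.coeff n = 0; rw [hN n hn, smul_zero]⟩⟩⟩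

instance : AddCommGroup (PDO R d) where
  add := (· + ·)
  zero := 0
  neg := Neg.neg
  add_assoc A B C := ext' (funext fun n => add_assoc (A.coeff n) (B.coeff n) (C.coeff n))
  zero_add A := ext' (funext fun n => zero_add (A.coeff n))
  add_zero A := ext' (funext fun n => add_zero (A.coeff n))
  add_comm A B := ext' (funext fun n => add_comm (A.coeff n) (B.coeff n))
  neg_add_cancel A := ext' (funext fun n => neg_add_cancel (A.coeff n))
  nsmul := nsmulRec
  zsmul := zsmulRec

/-- The product of pseudo-differential operators, determined by the commutation rule
`∂^k · f = Σ_{l ≥ 0} C(k,l) (∂^l f) ∂^(k-l)`. -/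
noncomputable instance : Mul (PDO R d) :=
  ⟨fun A B =>
    ⟨fun n => ∑ᶠ (k : ℤ) (m : ℤ),
        if _ : 0 ≤ k + m - n then
          A.coeff k * (gbinom k (k + m - n).toNat • (d^[(k + m - n).toNat] (B.coeff m)))
        else 0, by
      obtain ⟨N, hN⟩ := A.bdd
      obtain ⟨M, hM⟩ := B.bdd
      refine ⟨N + M, fun n hn => ?_⟩
      have hz : ∀ k m : ℤ,
          (if _ : 0 ≤ k + m - n then
            A.coeff k * (gbinom k (k + m - n).toNat • (d^[(k + m - n).toNat] (B.coeff m)))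
          else 0) = 0 := by
        intro k m
        by_cases hl : 0 ≤ k + m - n
        · rw [dif_pos hl]
          by_cases hk : N < k
          · rw [hN k hk, zero_mul]
          · rw [hM m (by omega), iterD_zero, smul_zero, mul_zero]
        · rw [dif_neg hl]
      simp only [hz, finsum_zero]⟩⟩

noncomputable def npow (A : PDO R d) : ℕ → PDO R d
  | 0 => 1
  | n + 1 => npow A n * A

noncomputable instance : Pow (PDO R d) ℕ := ⟨fun A n => A.npow n⟩

/-- The monomial `r ∂^k`. -/
def mono (r : R) (k : ℤ) : PDO R d :=
  ⟨fun n => if n = k then r else 0, ⟨k, fun n hn => if_neg (by omega)⟩⟩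

/-- The constant (order-zero) operator `r`. -/
def const (r : R) : PDO R d := mono r 0

/-- The operator `∂`. -/
def del : PDO R d := mono (1 : R) 1

/-- The operator `h∂`. -/
def hdel (h : Rˣ) : PDO R d := mono (h : R) 1

/-- The Lax operator `L = h²∂² + 2u`. -/
def Lop (h : Rˣ) (u : R) : PDO R d :=
  ⟨fun n => if n = 2 then (h : R) ^ 2 else if n = 0 then 2 * u else 0,
   ⟨2, fun n hn => by
      show (if n = 2 then (h : R) ^ 2 else if n = 0 then 2 * u else 0) = 0
      rw [if_neg (by omega), if_neg (by omega)]⟩⟩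

/-- The differential part `A₊`. -/
def pos (A : PDO R d) : PDO R d :=
  ⟨fun n => if 0 ≤ n then A.coeff n else 0, by
    obtain ⟨N, hN⟩ := A.bdd
    refine ⟨N, fun n hn => ?_⟩
    show (if 0 ≤ n then A.coeff n else 0) = 0
    by_cases h0 : (0 : ℤ) ≤ n
    · rw [if_pos h0]; exact hN n hn
    · rw [if_neg h0]⟩

/-- The integral part `A₋ = A − A₊`. -/
def negp (A : PDO R d) : PDO R d :=
  ⟨fun n => if n < 0 then A.coeff n else 0, ⟨0, fun n hn => if_neg (by omega)⟩⟩

/-- The residue `Res_∂ A = a₋₁`. -/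
def res (A : PDO R d) : R := A.coeff (-1)

/-- The formal adjoint, determined by `(f ∂^k)* = (−∂)^k · f`. -/
noncomputable def adj (A : PDO R d) : PDO R d :=
  ⟨fun n => ∑ᶠ k : ℤ,
      if _ : 0 ≤ k - n then
        (((-1 : ℚ) ^ k) * gbinom k (k - n).toNat) • (d^[(k - n).toNat] (A.coeff k))
      else 0, by
    obtain ⟨N, hN⟩ := A.bdd
    refine ⟨N, fun n hn => ?_⟩
    have hz : ∀ k : ℤ, (if _ : 0 ≤ k - n then
        (((-1 : ℚ) ^ k) * gbinom k (k - n).toNat) • (d^[(k - n).toNat] (A.coeff k))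
      else 0) = 0 := by
      intro k
      by_cases hl : 0 ≤ k - n
      · rw [dif_pos hl, hN k (by omega), iterD_zero, smul_zero]
      · rw [dif_neg hl]
    simp only [hz, finsum_zero]⟩

/-- The operator `P(h∂) = Σ pₙ hⁿ ∂ⁿ` associated to the symbol `P(λ) = Σ pₙ λⁿ`. -/
noncomputable def ofSymbol (h : Rˣ) (A : PDO R d) : PDO R d :=
  ⟨fun n => A.coeff n * ((h ^ n : Rˣ) : R), by
    obtain ⟨N, hN⟩ := A.bdd
    exact ⟨N, fun n hn => by show A.coeff n * ((h ^ n : Rˣ) : R) = 0; rw [hN n hn, zero_mul]⟩⟩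

/-- Apply `d^[i]` to each coefficient. -/
def mapD (i : ℕ) (A : PDO R d) : PDO R d :=
  ⟨fun n => d^[i] (A.coeff n), by
    obtain ⟨N, hN⟩ := A.bdd
    exact ⟨N, fun n hn => by show d^[i] (A.coeff n) = 0; rw [hN n hn, iterD_zero]⟩⟩

/-- The coefficientwise extension of an additive map `D : R →+ R`. -/
def mapHom (D : R →+ R) (A : PDO R d) : PDO R d :=
  ⟨fun n => D (A.coeff n), by
    obtain ⟨N, hN⟩ := A.bdd
    exact ⟨N, fun n hn => by show D (A.coeff n) = 0; rw [hN n hn, map_zero]⟩⟩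

/-- The commutator `[A, B] = AB − BA`. -/
noncomputable def comm (A B : PDO R d) : PDO R d := A * B - B * A

end PDO

/-- The Leibniz rule: `d` is a derivation. -/
def Leibniz {R : Type} [CommRing R] [Algebra ℚ R] (d : R →+ R) : Prop :=
  ∀ a b : R, d (a * b) = a * d b + b * d a

/-- `aₙ = 1/(2n+1)!!`. -/
def kdvA (n : ℕ) : ℚ := 1 / (Nat.doubleFactorial (2 * n + 1))

/-- `bₙ = (2n−1)!!` (with `b₀ = (−1)!! = 1`). -/
def kdvB (n : ℕ) : ℚ := (Nat.doubleFactorial (2 * n - 1) : ℕ)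

/-
Write `M = Σ aₙ ∂ⁿ` with `a₁ = h` and `aₙ = 0` for `n > 1`. Because `∂h = 0`, the coefficient of
`∂ⁿ` (`n ≤ 1`) in `M²` is `2h·aₙ₋₁ + h·∂aₙ + (a polynomial in aₙ, …, a₀ and their derivatives)`,
while those of `∂²` and above are `h²` and `0`. As `2h` is invertible, `M² = L` is thus a
triangular system determining each `aₙ₋₁` from `a₁, …, aₙ`, which gives existence and uniqueness;
its first three steps give `a₀`, `a₋₁` and `a₋₂`.
-/

open Finset

section TriangularRecursion

variable {α : Type*} [Zero α]

theorem eq_of_triangular_recursion {N : ℤ} {F : (ℤ → α) → ℤ → α}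
    (hF : ∀ a b, ∀ n ≤ N, (∀ m, n ≤ m → m ≤ N → a m = b m) → F a n = F b n)
    {a b : ℤ → α} (hab : a N = b N) (ha : ∀ k, N < k → a k = 0) (hb : ∀ k, N < k → b k = 0)
    (ha_rec : ∀ n ≤ N, a (n - 1) = F a n) (hb_rec : ∀ n ≤ N, b (n - 1) = F b n) : a = b := by
  have key : ∀ j : ℕ, ∀ m, N - j ≤ m → a m = b m := by
    intro j
    induction j with
    | zero =>
      intro m hm
      rcases (show N ≤ m by simpa using hm).eq_or_lt with rfl | hlt
      · exact hab
      · rw [ha m hlt, hb m hlt]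
    | succ j ih =>
      intro m hm
      rcases lt_or_ge m (N - j) with hlt | hge
      · obtain rfl : m = N - j - 1 := by omega
        rw [ha_rec _ (by omega), hb_rec _ (by omega)]
        exact hF a b _ (by omega) fun m' hm' _ => ih m' hm'
      · exact ih m hge
  funext m
  exact key (N - m).toNat m (by omega)

/-- Successive approximations; the `j`-th one is already final in the orders `≥ N - j`. -/
def triangularApprox (N : ℤ) (c : α) (F : (ℤ → α) → ℤ → α) : ℕ → ℤ → α
  | 0 => Function.update 0 N c
  | j + 1 =>
    Function.update (triangularApprox N c F j) (N - j - 1) (F (triangularApprox N c F j) (N - j))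

theorem triangularApprox_stable (N : ℤ) (c : α) (F : (ℤ → α) → ℤ → α) {i j : ℕ} (hij : j ≤ i)
    {m : ℤ} (hm : N - j ≤ m) : triangularApprox N c F i m = triangularApprox N c F j m := by
  induction i, hij using Nat.le_induction with
  | base => rfl
  | succ i hji ih =>
    rw [triangularApprox, Function.update_of_ne (by omega), ih]

theorem existsUnique_of_triangular_recursion (N : ℤ) (c : α) {F : (ℤ → α) → ℤ → α}
    (hF : ∀ a b, ∀ n ≤ N, (∀ m, n ≤ m → m ≤ N → a m = b m) → F a n = F b n) :
    ∃! a : ℤ → α, a N = c ∧ (∀ k, N < k → a k = 0) ∧ ∀ n ≤ N, a (n - 1) = F a n := by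
  let a : ℤ → α := fun m => triangularApprox N c F (N - m).toNat m
  have ha : ∀ (j : ℕ) m, N - j ≤ m → a m = triangularApprox N c F j m := fun j m hm => by
    rcases le_total j (N - m).toNat with hj | hj
    · exact triangularApprox_stable N c F hj hm
    · exact (triangularApprox_stable N c F hj (by omega)).symm
  have ha_top : ∀ m, N ≤ m → a m = Function.update (0 : ℤ → α) N c m :=
    fun m hm => ha 0 m (by omega)
  have ha_N : a N = c := by simp [ha_top]
  have ha_gt : ∀ k, N < k → a k = 0 := fun k hk => by simp [ha_top k hk.le, hk.ne']
  have ha_rec : ∀ n ≤ N, a (n - 1) = F a n := fun n hn => by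
    obtain ⟨j, rfl⟩ : ∃ j : ℕ, n = N - j := ⟨(N - n).toNat, by omega⟩
    rw [ha (j + 1) _ (by omega), triangularApprox, Function.update_self]
    exact hF _ _ _ hn fun m hm _ => (ha j m hm).symm
  refine ⟨a, ⟨ha_N, ha_gt, ha_rec⟩, fun b ⟨hb_N, hb_gt, hb_rec⟩ => ?_⟩
  exact eq_of_triangular_recursion hF (hb_N.trans ha_N.symm) hb_gt ha_gt hb_rec ha_rec

end TriangularRecursion

theorem finsum_eq_sum_Icc {M : Type*} [AddCommMonoid M] {f : ℤ → M} {p q : ℤ}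
    (hf : ∀ x, (x < p ∨ q < x) → f x = 0) : ∑ᶠ x, f x = ∑ x ∈ Icc p q, f x :=
  finsum_eq_finsetSum_of_support_subset f fun x hx => by
    by_contra hx'
    exact hx (hf x (by simp only [coe_Icc, Set.mem_Icc] at hx'; omega))

theorem gbinom_zero_right (k : ℤ) : gbinom k 0 = 1 := by simp [gbinom]

theorem gbinom_one_one : gbinom 1 1 = 1 := by simp [gbinom]

theorem gbinom_one_eq_zero_of_two_le {l : ℕ} (hl : 2 ≤ l) : gbinom 1 l = 0 := by
  rw [gbinom, prod_eq_zero (i := 1) (mem_range.mpr hl) (by norm_num), zero_div]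

section QAlgebra

variable {R : Type*} [Ring R] [Algebra ℚ R]

theorem eq_two_inv_smul_iff {x y : R} : x = (2⁻¹ : ℚ) • y ↔ 2 * x = y := by
  have h2 : ∀ z : R, 2 * z = (2 : ℚ) • z := fun z => by rw [two_mul, two_smul]
  constructor <;> rintro rfl <;> rw [h2, smul_smul] <;> norm_num

theorem two_mul_units_mul_add_eq_iff (h : Rˣ) {x c v : R} :
    2 * (h * x) + c = v ↔ x = (2⁻¹ : ℚ) • (↑h⁻¹ * (v - c)) := by
  rw [eq_two_inv_smul_iff, Units.eq_inv_mul_iff_mul_eq, ← eq_sub_iff_add_eq, two_mul, two_mul,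
    mul_add]

end QAlgebra

section Leibniz

variable {R : Type} [CommRing R] [Algebra ℚ R] {d : R →+ R}

def Leibniz.toDerivation (hd : Leibniz d) : Derivation ℤ R R :=
  Derivation.mk' d.toIntLinearMap hd

theorem Leibniz.toDerivation_apply (hd : Leibniz d) (x : R) : hd.toDerivation x = d x := rfl

theorem Leibniz.map_mul_units_inv (hd : Leibniz d) {h : Rˣ} (hdh : d h = 0) (u : R) :
    d (u * ↑h⁻¹) = ↑h⁻¹ * d u := by
  have hinv : d ↑h⁻¹ = 0 := by
    rw [← hd.toDerivation_apply, hd.toDerivation.leibniz_of_mul_eq_one h.inv_mul,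
      hd.toDerivation_apply, hdh, smul_zero]
  rw [hd, hinv, mul_zero, zero_add]

end Leibniz

namespace PDO

variable {R : Type} [CommRing R] [Algebra ℚ R] {d : R →+ R}

/-- The contribution of `a k ∂ᵏ · b m ∂ᵐ` to the coefficient of `∂ⁿ`. -/
def mulTerm (d : R →+ R) (a b : ℤ → R) (n k m : ℤ) : R :=
  a k * (gbinom k (k + m - n).toNat • d^[(k + m - n).toNat] (b m))

theorem coeff_mul_eq_sum (A B : PDO R d) {p q : ℤ} (hA : ∀ k, p < k → A.coeff k = 0)
    (hB : ∀ m, q < m → B.coeff m = 0) (n : ℤ) :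
    (A * B).coeff n =
      ∑ k ∈ Icc (n - q) p, ∑ m ∈ Icc (n - k) q, mulTerm d A.coeff B.coeff n k m := by
  have row : ∀ k : ℤ, (∑ᶠ m : ℤ, if _ : 0 ≤ k + m - n then mulTerm d A.coeff B.coeff n k m
      else 0) = ∑ m ∈ Icc (n - k) q, mulTerm d A.coeff B.coeff n k m := fun k => by
    rw [finsum_eq_sum_Icc fun m hm => ?_]
    · exact sum_congr rfl fun m hm => dif_pos (by simp only [mem_Icc] at hm; omega)
    · split_ifs
      · rw [mulTerm, hB m (by omega), iterD_zero, smul_zero, mul_zero]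
      · rfl
  refine (finsum_congr row).trans (finsum_eq_sum_Icc fun k hk => ?_)
  rcases hk with hk | hk
  · exact sum_eq_zero fun m hm => by simp only [mem_Icc] at hm; omega
  · exact sum_eq_zero fun m _ => by rw [mulTerm, hA k hk, zero_mul]

theorem mulTerm_of_add_eq (a b : ℤ → R) {n k m : ℤ} (h : k + m = n) :
    mulTerm d a b n k m = a k * b m := by
  simp [mulTerm, h, gbinom_zero_right]

theorem mulTerm_eq_zero_of_map_eq_zero (a b : ℤ → R) {n k m : ℤ} (hb : d (b m) = 0)
    (h : n < k + m) : mulTerm d a b n k m = 0 := by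
  obtain ⟨l, hl⟩ : ∃ l : ℕ, (k + m - n).toNat = l + 1 := ⟨(k + m - n).toNat - 1, by omega⟩
  rw [mulTerm, hl, Function.iterate_succ_apply, hb, iterD_zero, smul_zero, mul_zero]

theorem sum_mulTerm_row_one (a b : ℤ → R) {n : ℤ} (hn : n ≤ 1) :
    ∑ m ∈ Icc (n - 1) 1, mulTerm d a b n 1 m = a 1 * b (n - 1) + a 1 * d (b n) := by
  have hIcc : Icc (n - 1) 1 = insert (n - 1) (insert n (Icc (n + 1) 1)) := by
    ext; simp only [mem_Icc, mem_insert]; omega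
  rw [hIcc, sum_insert (by simp), sum_insert (by simp), mulTerm_of_add_eq a b (by ring),
    sum_eq_zero fun m hm => ?_, add_zero]
  · simp [mulTerm, gbinom_one_one]
  · simp only [mem_Icc] at hm
    rw [mulTerm, gbinom_one_eq_zero_of_two_le (by omega), zero_smul, mul_zero]

noncomputable def lowerSum (d : R →+ R) (a : ℤ → R) (n : ℤ) : R :=
  ∑ k ∈ Icc n 0, ∑ m ∈ Icc (n - k) 0, mulTerm d a a n k m

theorem sum_mulTerm_self_eq {a : ℤ → R} (ha : d (a 1) = 0) {n : ℤ} (hn : n ≤ 1) :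
    ∑ k ∈ Icc (n - 1) 1, ∑ m ∈ Icc (n - k) 1, mulTerm d a a n k m =
      2 * (a 1 * a (n - 1)) + (a 1 * d (a n) + lowerSum d a n) := by
  have hIcc : Icc (n - 1) 1 = insert (n - 1) (insert 1 (Icc n 0)) := by
    ext; simp only [mem_Icc, mem_insert]; omega
  have hrow : ∀ k ∈ Icc n 0, ∑ m ∈ Icc (n - k) 1, mulTerm d a a n k m =
      ∑ m ∈ Icc (n - k) 0, mulTerm d a a n k m := fun k hk => by
    simp only [mem_Icc] at hk
    have hIcc' : Icc (n - k) 1 = insert 1 (Icc (n - k) 0) := by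
      ext; simp only [mem_Icc, mem_insert]; omega
    rw [hIcc', sum_insert (by simp), mulTerm_eq_zero_of_map_eq_zero a a ha (by omega), zero_add]
  rw [hIcc, sum_insert (by simp; omega), sum_insert (by simp), sum_mulTerm_row_one a a hn,
    sum_congr rfl hrow, ← lowerSum, show n - (n - 1) = 1 by ring, Icc_self, sum_singleton,
    mulTerm_of_add_eq a a (by ring)]
  ring

section Square

variable {M : PDO R d} (htop : ∀ k, 1 < k → M.coeff k = 0)
include htop

theorem coeff_mul_self_of_le_one (hM : d (M.coeff 1) = 0) {n : ℤ} (hn : n ≤ 1) :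
    (M * M).coeff n =
      2 * (M.coeff 1 * M.coeff (n - 1)) + (M.coeff 1 * d (M.coeff n) + lowerSum d M.coeff n) := by
  rw [coeff_mul_eq_sum M M htop htop, sum_mulTerm_self_eq hM hn]

theorem coeff_mul_self_two : (M * M).coeff 2 = M.coeff 1 ^ 2 := by
  rw [coeff_mul_eq_sum M M htop htop, show (2 : ℤ) - 1 = 1 by norm_num, Icc_self, sum_singleton,
    show (2 : ℤ) - 1 = 1 by norm_num, Icc_self, sum_singleton,
    mulTerm_of_add_eq _ _ (by norm_num), sq]

theorem coeff_mul_self_of_two_lt {n : ℤ} (hn : 2 < n) : (M * M).coeff n = 0 := by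
  rw [coeff_mul_eq_sum M M htop htop, Icc_eq_empty (by omega), sum_empty]

end Square

/-- The value of `aₙ₋₁` forced by the coefficient of `∂ⁿ` in `M² = L`, given `aₙ, …, a₁`. -/
noncomputable def sqrtStep (d : R →+ R) (h : Rˣ) (u : R) (a : ℤ → R) (n : ℤ) : R :=
  (2⁻¹ : ℚ) • (↑h⁻¹ * ((Lop h u : PDO R d).coeff n - (h * d (a n) + lowerSum d a n)))

theorem sqrtStep_congr (h : Rˣ) (u : R) {a b : ℤ → R} {n : ℤ} (hn : n ≤ 1)
    (hab : ∀ m, n ≤ m → m ≤ 1 → a m = b m) : sqrtStep d h u a n = sqrtStep d h u b n := by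
  have hsum : lowerSum d a n = lowerSum d b n :=
    sum_congr rfl fun k hk => sum_congr rfl fun m hm => by
      simp only [mem_Icc] at hk hm
      rw [mulTerm, mulTerm, hab k (by omega) (by omega), hab m (by omega) (by omega)]
  rw [sqrtStep, sqrtStep, hab n le_rfl hn, hsum]

theorem coeff_Lop (h : Rˣ) (u : R) (n : ℤ) : (Lop h u : PDO R d).coeff n =
    if n = 2 then (h : R) ^ 2 else if n = 0 then 2 * u else 0 := rfl

theorem mul_self_eq_Lop_iff {h : Rˣ} (hdh : d h = 0) (u : R) {M : PDO R d}
    (h1 : M.coeff 1 = h) (htop : ∀ k, 1 < k → M.coeff k = 0) :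
    M * M = Lop h u ↔ ∀ n ≤ 1, M.coeff (n - 1) = sqrtStep d h u M.coeff n := by
  have hsq : ∀ n ≤ 1, (M * M).coeff n =
      2 * (h * M.coeff (n - 1)) + (h * d (M.coeff n) + lowerSum d M.coeff n) := fun n hn => by
    rw [coeff_mul_self_of_le_one htop (h1 ▸ hdh) hn, h1]
  refine ⟨fun hML n hn => ?_, fun hrec => ext' (funext fun n => ?_)⟩
  · rw [sqrtStep, ← two_mul_units_mul_add_eq_iff, ← hsq n hn, hML]
  · rcases le_or_gt n 1 with hn | hn
    · rw [hsq n hn, two_mul_units_mul_add_eq_iff]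
      exact hrec n hn
    · rcases (show 2 ≤ n by omega).eq_or_lt with rfl | h2
      · rw [coeff_mul_self_two htop, h1, coeff_Lop, if_pos rfl]
      · rw [coeff_mul_self_of_two_lt htop h2, coeff_Lop, if_neg (by omega), if_neg (by omega)]

theorem lowerSum_eq_zero {a : ℤ → R} (h0 : a 0 = 0) {n : ℤ} (hn : -1 ≤ n) : lowerSum d a n = 0 :=
  sum_eq_zero fun k hk => sum_eq_zero fun m hm => by
    simp only [mem_Icc] at hk hm
    rcases (show k = 0 ∨ m = 0 by omega) with rfl | rfl
    · rw [mulTerm, h0, zero_mul]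
    · rw [mulTerm, h0, iterD_zero, smul_zero, mul_zero]

theorem coeff_zero_neg_one_neg_two_of_sqrtStep (hd : Leibniz d) {h : Rˣ} (hdh : d h = 0) (u : R)
    {a : ℤ → R} (ha1 : a 1 = h) (hrec : ∀ n ≤ 1, a (n - 1) = sqrtStep d h u a n) :
    a 0 = 0 ∧ a (-1) = u * ↑h⁻¹ ∧ a (-2) = -((2 : ℚ)⁻¹ • (d u * ↑h⁻¹)) := by
  have h0 : a 0 = 0 := by
    simpa only [sub_self, sqrtStep, coeff_Lop, OfNat.one_ne_ofNat, ↓reduceIte, one_ne_zero, ha1,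
      hdh, mul_zero, lowerSum, zero_lt_one, Icc_eq_empty_of_lt, sum_empty, add_zero, smul_zero]
      using hrec 1 le_rfl
  have h1 : a (-1) = u * ↑h⁻¹ := by
    have := hrec 0 (by norm_num)
    simp only [zero_sub, sqrtStep, coeff_Lop, OfNat.zero_ne_ofNat, ↓reduceIte, h0, map_zero,
      mul_zero, lowerSum_eq_zero h0 (show (-1 : ℤ) ≤ 0 by norm_num), add_zero, sub_zero] at this
    rw [this, show ↑h⁻¹ * (2 * u) = 2 * (u * ↑h⁻¹) by ring]
    exact (eq_two_inv_smul_iff.2 rfl).symm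
  refine ⟨h0, h1, ?_⟩
  have := hrec (-1) (by norm_num)
  simp only [Int.reduceNeg, Int.reduceSub, sqrtStep, coeff_Lop, reduceCtorEq, ↓reduceIte, h1,
    hd.map_mul_units_inv hdh, Units.mul_inv_cancel_left, lowerSum_eq_zero h0 le_rfl, add_zero,
    zero_sub, mul_neg, smul_neg] at this
  rw [this, mul_comm]

end PDO

/-- For `L = h²∂² + 2u` there is a unique pseudo-differential operator `M` with
`M − h∂` of order `≤ 0` and `M² = L`; moreover its coefficients of `∂⁰`, `∂⁻¹`, `∂⁻²`
are `0`, `u/h` and `−(∂u)/(2h)` respectively. -/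
theorem square_root_of_Lax_operator
    (R : Type) [CommRing R] [Algebra ℚ R] (d : R →+ R)
    (hd : Leibniz d) (h : Rˣ) (hdh : d (h : R) = 0)
    (u : R) :
    (∃! M : PDO R d,
      (M.coeff 1 = (h : R) ∧ ∀ k : ℤ, 1 < k → M.coeff k = 0) ∧ M * M = PDO.Lop h u) ∧
    (∀ M : PDO R d,
      (M.coeff 1 = (h : R) ∧ ∀ k : ℤ, 1 < k → M.coeff k = 0) → M * M = PDO.Lop h u →
        M.coeff 0 = 0 ∧ M.coeff (-1) = u * ((h⁻¹ : Rˣ) : R) ∧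
          M.coeff (-2) = -((2 : ℚ)⁻¹ • (d u * ((h⁻¹ : Rˣ) : R)))) := by
  have hsq (M : PDO R d) (hM : M.coeff 1 = h ∧ ∀ k : ℤ, 1 < k → M.coeff k = 0) :=
    PDO.mul_self_eq_Lop_iff hdh u hM.1 hM.2
  obtain ⟨a, ⟨ha1, htop, hrec⟩, huniq⟩ :=
    existsUnique_of_triangular_recursion 1 (h : R) (F := PDO.sqrtStep d h u)
      fun _ _ _ hn hab => PDO.sqrtStep_congr h u hn hab
  refine ⟨⟨⟨a, 1, htop⟩, ⟨⟨ha1, htop⟩, (hsq _ ⟨ha1, htop⟩).2 hrec⟩, ?_⟩, ?_⟩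
  · rintro M ⟨hM, hMM⟩
    exact PDO.ext' (huniq _ ⟨hM.1, hM.2, (hsq M hM).1 hMM⟩)
  · intro M hM hMM
    exact PDO.coeff_zero_neg_one_neg_two_of_sqrtStep hd hdh u hM.1 ((hsq M hM).1 hMM)
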